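/- arXiv:2112.06728 — 3 statements merged into one kernel-verified Lean document; each statement's English description precedes it below -/
import Mathlib

section
/- Let d, T ≥ 1 be integers, L > 0, and λ ≥ max{1, L²}. Let x_1, …, x_T ∈ ℝ^d satisfy ‖x_i‖₂ ≤ L for all i, and define V_t := λ I_d + Σ_{i=1}^{t-1} x_i x_iᵀ for t = 1, …, T. Then Σ_{i=1}^T ‖x_i‖_{V_i^{-1}} ≤ √( T · Σ_{i=1}^T ‖x_i‖²_{V_i^{-1}} ) ≤ √( 2 T d log(1 + T L² / (d λ)) ). -/
/-!
The first inequality is Cauchy–Schwarz. For the second, write `uₜ = ‖xₜ‖²_{Vₜ⁻¹}`.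
The matrix determinant lemma gives `det V_{t+1} = det Vₜ · (1 + uₜ)`, so
`∏ₜ (1 + uₜ) = det V_T / λ^d`, and AM–GM on the eigenvalues of `V_T` bounds
`det V_T ≤ (tr V_T / d)^d ≤ (λ + T L² / d)^d`. Since `Vₜ ≥ λ I` and `λ ≥ L²`, each
`uₜ ≤ ‖xₜ‖² / λ ≤ 1`, and on `[0, 2]` we have `u ≤ 2 log (1 + u)`; taking logarithms gives
`∑ₜ uₜ ≤ 2 d log (1 + T L² / (d λ))`.
-/

open Matrix Finset

/-- Weighted norm ‖x‖_V := √(xᵀ V x). -/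
noncomputable def wnorm {d : ℕ} (V : Matrix (Fin d) (Fin d) ℝ) (x : Fin d → ℝ) : ℝ :=
  Real.sqrt (x ⬝ᵥ (V *ᵥ x))

/-- Euclidean norm on ℝ^d. -/
noncomputable def enorm2 {d : ℕ} (x : Fin d → ℝ) : ℝ :=
  Real.sqrt (∑ i, (x i) ^ 2)

theorem Real.half_le_log_one_add {u : ℝ} (h0 : 0 ≤ u) (h2 : u ≤ 2) : u / 2 ≤ log (1 + u) := by
  refine le_trans ?_ (le_log_one_add_of_nonneg h0)
  rw [le_div_iff₀ (by linarith)]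
  nlinarith

theorem Real.prod_le_arith_mean_pow {ι : Type*} (s : Finset ι) (z : ι → ℝ)
    (hz : ∀ i ∈ s, 0 ≤ z i) : ∏ i ∈ s, z i ≤ ((∑ i ∈ s, z i) / #s) ^ #s := by
  rcases s.eq_empty_or_nonempty with rfl | hs
  · simp
  have hcard : #s ≠ 0 := hs.card_ne_zero
  have amgm := geom_mean_le_arith_mean_weighted s (fun _ ↦ ((#s : ℕ) : ℝ)⁻¹) z
    (fun _ _ ↦ by positivity) (by simp [hcard]) hz
  calc ∏ i ∈ s, z i = (∏ i ∈ s, z i ^ ((#s : ℕ) : ℝ)⁻¹) ^ #s := by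
        rw [← prod_pow]
        exact prod_congr rfl fun i hi ↦ (rpow_inv_natCast_pow (hz i hi) hcard).symm
    _ ≤ (∑ i ∈ s, ((#s : ℕ) : ℝ)⁻¹ * z i) ^ #s :=
        pow_le_pow_left₀ (prod_nonneg fun i hi ↦ rpow_nonneg (hz i hi) _) amgm _
    _ = ((∑ i ∈ s, z i) / #s) ^ #s := by rw [← mul_sum, inv_mul_eq_div]

theorem Matrix.PosSemidef.det_le_trace_div_card_pow {n : Type*} [Fintype n] [DecidableEq n]
    {M : Matrix n n ℝ} (hM : M.PosSemidef) :
    M.det ≤ (M.trace / Fintype.card n) ^ Fintype.card n := by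
  rw [hM.isHermitian.det_eq_prod_eigenvalues, hM.isHermitian.trace_eq_sum_eigenvalues]
  simpa using Real.prod_le_arith_mean_pow Finset.univ _ fun i _ ↦ hM.eigenvalues_nonneg i

theorem Matrix.det_add_vecMulVec {n R : Type*} [Fintype n] [DecidableEq n] [CommRing R]
    {A : Matrix n n R} (hA : IsUnit A.det) (u v : n → R) :
    (A + vecMulVec u v).det = A.det * (1 + v ⬝ᵥ (A⁻¹ *ᵥ u)) := by
  rw [vecMulVec_eq Unit, det_add_replicateCol_mul_replicateRow hA, det_unique (n := Unit),
    Matrix.mul_assoc, ← replicateCol_mulVec, add_apply, one_apply_eq,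
    replicateRow_mul_replicateCol_apply]

theorem Matrix.posSemidef_sum_vecMulVec_self {ι n : Type*} [Fintype n] (s : Finset ι)
    (x : ι → n → ℝ) : (∑ i ∈ s, vecMulVec (x i) (x i)).PosSemidef :=
  posSemidef_sum s fun i _ ↦ by simpa using posSemidef_vecMulVec_self_star (x i)

theorem Matrix.PosSemidef.dotProduct_smul_one_add_inv_mulVec_le {n : Type*} [Fintype n]
    [DecidableEq n] {S : Matrix n n ℝ} (hS : S.PosSemidef) {lam : ℝ} (hlam : 0 < lam)
    (z : n → ℝ) : z ⬝ᵥ ((lam • 1 + S)⁻¹ *ᵥ z) ≤ z ⬝ᵥ z / lam := by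
  set M := lam • 1 + S
  have hM : M.PosDef := (PosDef.one.smul hlam).add_posSemidef hS
  set y := M⁻¹ *ᵥ z
  have hMy : M *ᵥ y = z := by
    rw [mulVec_mulVec, mul_nonsing_inv _ hM.det_pos.ne'.isUnit, one_mulVec]
  have hy : lam * (y ⬝ᵥ y) ≤ z ⬝ᵥ y := by
    have := hS.dotProduct_mulVec_nonneg y
    rw [← hMy, add_mulVec, add_dotProduct, smul_mulVec, one_mulVec, smul_dotProduct,
      smul_eq_mul, dotProduct_comm (S *ᵥ y)]
    simpa using this
  -- `0 ≤ ‖z - lam y‖²` together with `hy` gives `lam (z ⬝ y) ≤ z ⬝ z`.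
  have hsq := dotProduct_self_star_nonneg (z - lam • y)
  simp only [star_trivial, sub_dotProduct, dotProduct_sub, smul_dotProduct, dotProduct_smul,
    smul_eq_mul, dotProduct_comm y z] at hsq
  rw [le_div_iff₀ hlam]
  nlinarith

theorem wnorm_sq {d : ℕ} {V : Matrix (Fin d) (Fin d) ℝ} (hV : V.PosSemidef) (x : Fin d → ℝ) :
    wnorm V x ^ 2 = x ⬝ᵥ (V *ᵥ x) :=
  Real.sq_sqrt (by simpa using hV.dotProduct_mulVec_nonneg x)

theorem enorm2_sq {d : ℕ} (x : Fin d → ℝ) : enorm2 x ^ 2 = x ⬝ᵥ x := by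
  rw [enorm2, Real.sq_sqrt (by positivity)]
  simp [dotProduct, sq]

section DesignMatrix

variable {n : Type*} [DecidableEq n] (lam : ℝ) (x : ℕ → n → ℝ)

def designMatrix (t : ℕ) : Matrix n n ℝ :=
  lam • 1 + ∑ i ∈ range t, vecMulVec (x i) (x i)

theorem designMatrix_succ (t : ℕ) :
    designMatrix lam x (t + 1) = designMatrix lam x t + vecMulVec (x t) (x t) := by
  simp only [designMatrix, sum_range_succ, add_assoc]

variable [Fintype n]

noncomputable def ellipticalPotential (t : ℕ) : ℝ :=
  x t ⬝ᵥ ((designMatrix lam x t)⁻¹ *ᵥ x t)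

variable {lam}

theorem designMatrix_posDef (hlam : 0 < lam) (t : ℕ) : (designMatrix lam x t).PosDef :=
  (PosDef.one.smul hlam).add_posSemidef (posSemidef_sum_vecMulVec_self (range t) x)

theorem det_designMatrix (hlam : 0 < lam) (t : ℕ) :
    (designMatrix lam x t).det =
      lam ^ Fintype.card n * ∏ i ∈ range t, (1 + ellipticalPotential lam x i) := by
  induction t with
  | zero => simp [designMatrix]
  | succ t ih =>
    rw [designMatrix_succ, det_add_vecMulVec (designMatrix_posDef x hlam t).det_pos.ne'.isUnit,
      ih, prod_range_succ, mul_assoc]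
    rfl

theorem trace_designMatrix (t : ℕ) :
    (designMatrix lam x t).trace = Fintype.card n * lam + ∑ i ∈ range t, x i ⬝ᵥ x i := by
  simp [designMatrix, trace_sum, trace_vecMulVec, mul_comm]

theorem ellipticalPotential_nonneg (hlam : 0 < lam) (t : ℕ) :
    0 ≤ ellipticalPotential lam x t := by
  simpa [ellipticalPotential] using
    (designMatrix_posDef x hlam t).inv.posSemidef.dotProduct_mulVec_nonneg (x t)

theorem ellipticalPotential_le (hlam : 0 < lam) (t : ℕ) :
    ellipticalPotential lam x t ≤ x t ⬝ᵥ x t / lam :=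
  (posSemidef_sum_vecMulVec_self (range t) x).dotProduct_smul_one_add_inv_mulVec_le hlam (x t)

variable {T : ℕ} {L : ℝ}

theorem prod_one_add_ellipticalPotential_le (hn : 0 < Fintype.card n) (hlam : 0 < lam)
    (hx : ∀ i < T, x i ⬝ᵥ x i ≤ L ^ 2) :
    ∏ t ∈ range T, (1 + ellipticalPotential lam x t) ≤
      (1 + T * L ^ 2 / (Fintype.card n * lam)) ^ Fintype.card n := by
  set d := Fintype.card n
  have hd : (0 : ℝ) < d := by exact_mod_cast hn
  have htrace : (designMatrix lam x T).trace / d ≤ lam * (1 + T * L ^ 2 / (d * lam)) := by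
    have hsum : ∑ i ∈ range T, x i ⬝ᵥ x i ≤ T * L ^ 2 := by
      simpa using sum_le_sum fun i hi ↦ hx i (mem_range.mp hi)
    rw [trace_designMatrix, div_le_iff₀ hd]
    field_simp
    linarith
  refine le_of_mul_le_mul_left ?_ (pow_pos hlam d)
  calc lam ^ d * ∏ t ∈ range T, (1 + ellipticalPotential lam x t)
      = (designMatrix lam x T).det := (det_designMatrix x hlam T).symm
    _ ≤ ((designMatrix lam x T).trace / d) ^ d :=
        (designMatrix_posDef x hlam T).posSemidef.det_le_trace_div_card_pow
    _ ≤ (lam * (1 + T * L ^ 2 / (d * lam))) ^ d :=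
        pow_le_pow_left₀ (div_nonneg (designMatrix_posDef x hlam T).posSemidef.trace_nonneg hd.le)
          htrace d
    _ = lam ^ d * (1 + T * L ^ 2 / (d * lam)) ^ d := mul_pow _ _ _

theorem sum_ellipticalPotential_le (hn : 0 < Fintype.card n) (hlam : 0 < lam)
    (hLlam : L ^ 2 ≤ lam) (hx : ∀ i < T, x i ⬝ᵥ x i ≤ L ^ 2) :
    ∑ t ∈ range T, ellipticalPotential lam x t ≤
      2 * Fintype.card n * Real.log (1 + T * L ^ 2 / (Fintype.card n * lam)) := by
  have hpos : ∀ t, 0 < 1 + ellipticalPotential lam x t := fun t ↦ by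
    linarith [ellipticalPotential_nonneg x hlam t]
  have hle_two : ∀ t < T, ellipticalPotential lam x t ≤ 2 := fun t ht ↦ calc
    _ ≤ x t ⬝ᵥ x t / lam := ellipticalPotential_le x hlam t
    _ ≤ 1 := (div_le_one hlam).mpr ((hx t ht).trans hLlam)
    _ ≤ 2 := one_le_two
  calc ∑ t ∈ range T, ellipticalPotential lam x t
      ≤ ∑ t ∈ range T, 2 * Real.log (1 + ellipticalPotential lam x t) :=
        sum_le_sum fun t ht ↦ by
          linarith [Real.half_le_log_one_add (ellipticalPotential_nonneg x hlam t)
            (hle_two t (mem_range.mp ht))]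
    _ = 2 * Real.log (∏ t ∈ range T, (1 + ellipticalPotential lam x t)) := by
        rw [Real.log_prod fun t _ ↦ (hpos t).ne', mul_sum]
    _ ≤ 2 * Real.log ((1 + T * L ^ 2 / (Fintype.card n * lam)) ^ Fintype.card n) := by
        gcongr
        · exact prod_pos fun t _ ↦ hpos t
        · exact prod_one_add_ellipticalPotential_le x hn hlam hx
    _ = 2 * Fintype.card n * Real.log (1 + T * L ^ 2 / (Fintype.card n * lam)) := by
        rw [Real.log_pow, mul_assoc]

end DesignMatrix

theorem sum_self_normalized_bound_general (d T : ℕ) (hd : 1 ≤ d)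
    (L lam : ℝ) (hlam : max 1 (L ^ 2) ≤ lam)
    (x : ℕ → Fin d → ℝ) (hx : ∀ i < T, enorm2 (x i) ≤ L)
    (V : ℕ → Matrix (Fin d) (Fin d) ℝ)
    (hV : ∀ t, V t = lam • (1 : Matrix (Fin d) (Fin d) ℝ) +
      ∑ i ∈ Finset.range t, vecMulVec (x i) (x i)) :
    (∑ t ∈ Finset.range T, wnorm (V t)⁻¹ (x t)) ≤
        Real.sqrt ((T : ℝ) * ∑ t ∈ Finset.range T, (wnorm (V t)⁻¹ (x t)) ^ 2) ∧
      Real.sqrt ((T : ℝ) * ∑ t ∈ Finset.range T, (wnorm (V t)⁻¹ (x t)) ^ 2) ≤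
        Real.sqrt (2 * (T : ℝ) * (d : ℝ) *
          Real.log (1 + (T : ℝ) * L ^ 2 / ((d : ℝ) * lam))) := by
  have hlam0 : 0 < lam := one_pos.trans_le ((le_max_left _ _).trans hlam)
  have hV' : V = designMatrix lam x := funext hV
  have hwnorm_sq : ∀ t, wnorm (V t)⁻¹ (x t) ^ 2 = ellipticalPotential lam x t := fun t ↦ by
    rw [hV', wnorm_sq (designMatrix_posDef x hlam0 t).posSemidef.inv]
    rfl
  have hx_sq : ∀ i < T, x i ⬝ᵥ x i ≤ L ^ 2 := fun i hi ↦ by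
    rw [← enorm2_sq]
    exact pow_le_pow_left₀ (Real.sqrt_nonneg _) (hx i hi) 2
  have hpotential := sum_ellipticalPotential_le x (by rwa [Fintype.card_fin]) hlam0
    ((le_max_right _ _).trans hlam) hx_sq
  simp only [Fintype.card_fin] at hpotential
  refine ⟨(le_abs_self _).trans (Real.abs_le_sqrt ?_), Real.sqrt_le_sqrt ?_⟩
  · simpa using sq_sum_le_card_mul_sum_sq (s := range T) (f := fun t ↦ wnorm (V t)⁻¹ (x t))
  · simp only [hwnorm_sq]
    calc (T : ℝ) * ∑ t ∈ range T, ellipticalPotential lam x t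
        ≤ T * (2 * d * Real.log (1 + T * L ^ 2 / (d * lam))) := by gcongr
      _ = 2 * T * d * Real.log (1 + T * L ^ 2 / (d * lam)) := by ring

theorem sum_self_normalized_bound (d T : ℕ) (hd : 1 ≤ d) (hT : 1 ≤ T)
    (L lam : ℝ) (hL : 0 < L) (hlam : max 1 (L ^ 2) ≤ lam)
    (x : ℕ → Fin d → ℝ) (hx : ∀ i < T, enorm2 (x i) ≤ L)
    (V : ℕ → Matrix (Fin d) (Fin d) ℝ)
    (hV : ∀ t, V t = lam • (1 : Matrix (Fin d) (Fin d) ℝ) +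
      ∑ i ∈ Finset.range t, vecMulVec (x i) (x i)) :
    (∑ t ∈ Finset.range T, wnorm (V t)⁻¹ (x t)) ≤
        Real.sqrt ((T : ℝ) * ∑ t ∈ Finset.range T, (wnorm (V t)⁻¹ (x t)) ^ 2) ∧
      Real.sqrt ((T : ℝ) * ∑ t ∈ Finset.range T, (wnorm (V t)⁻¹ (x t)) ^ 2) ≤
        Real.sqrt (2 * (T : ℝ) * (d : ℝ) *
          Real.log (1 + (T : ℝ) * L ^ 2 / ((d : ℝ) * lam))) :=
  sum_self_normalized_bound_general d T hd L lam hlam x hx V hV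
end

section
/- Let d, T ≥ 1 be integers, λ > 0, L > 0, ρ > 0. Let x_1, …, x_T ∈ ℝ^d satisfy ‖x_t‖₂ ≤ L for all t, and define V_t := λ I_d + Σ_{i=1}^{t-1} x_i x_iᵀ. Let τ' := { t ∈ {1,…,T} : ‖x_t‖_{V_t^{-1}} ≥ ρ }. Then the cardinality of τ' satisfies |τ'| ≤ (3 d / log(1 + ρ²)) · log( 1 + L² / ( λ · log(1 + ρ²) ) ). -/
/-!
Let `S` be the set of large-norm rounds and `W := λ I + ∑_{t ∈ S} x_t x_tᵀ`. For `t ∈ S` the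
partial matrix `λ I + ∑_{s ∈ S, s < t} x_s x_sᵀ` is below `V_t` in the Loewner order, so `x_t`
still has squared norm at least `ρ²` in its inverse; by the matrix determinant lemma each such
round multiplies the determinant by at least `1 + ρ²`, whence `det W ≥ λ^d (1 + ρ²)^|S|`.
AM-GM on the eigenvalues gives `det W ≤ (tr W / d)^d ≤ (λ + |S| L² / d)^d`. Taking logarithms,
`|S| log (1 + ρ²) ≤ d log (1 + |S| L² / (d λ))`, and concavity of `log` turns this implicit bound
on `|S|` into the explicit one.
-/

open Matrix Finset

open scoped MatrixOrder

theorem Finset.prod_le_sum_div_card_pow {ι : Type*} (s : Finset ι) {z : ι → ℝ}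
    (hz : ∀ i ∈ s, 0 ≤ z i) : ∏ i ∈ s, z i ≤ ((∑ i ∈ s, z i) / #s) ^ #s := by
  rcases s.eq_empty_or_nonempty with rfl | hs
  · simp
  have hcard : (0 : ℝ) < #s := by exact_mod_cast hs.card_pos
  have amgm := Real.geom_mean_le_arith_mean s (fun _ => 1) z (fun _ _ => zero_le_one)
    (by simpa using hcard) hz
  simp only [Real.rpow_one, one_mul, sum_const, nsmul_eq_mul, mul_one] at amgm
  calc ∏ i ∈ s, z i = ((∏ i ∈ s, z i) ^ (#s : ℝ)⁻¹) ^ #s := by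
        rw [← Real.rpow_natCast, ← Real.rpow_mul (prod_nonneg hz), inv_mul_cancel₀ hcard.ne',
          Real.rpow_one]
    _ ≤ ((∑ i ∈ s, z i) / #s) ^ #s := by gcongr; exact Real.rpow_nonneg (prod_nonneg hz) _

theorem Real.mul_log_one_add_le_log_one_add_mul {s θ : ℝ} (hs : -1 < s) (hθ₀ : 0 ≤ θ)
    (hθ₁ : θ ≤ 1) : θ * log (1 + s) ≤ log (1 + θ * s) := by
  have hpos : 0 < 1 + s := by linarith
  rw [← Real.log_rpow hpos]
  exact Real.log_le_log (Real.rpow_pos_of_pos hpos θ)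
    (rpow_one_add_le_one_add_mul_self hs.le hθ₀ hθ₁)

theorem Real.le_three_mul_log_of_le_log_one_add_mul {y u : ℝ} (hu : 0 < u) (hy : 0 ≤ y)
    (h : y ≤ log (1 + y * u)) : y ≤ 3 * log (1 + u) := by
  by_contra! hlt
  set Y := 3 * log (1 + u)
  have hY₀ : 0 < Y := by have := Real.log_pos (by linarith : 1 < 1 + u); positivity
  have hy₀ : 0 < y := hY₀.trans hlt
  -- `y ↦ log (1 + y * u) - y` is concave and vanishes at `0`, so it stays nonnegative on `[0, y]`
  have hY_le : Y ≤ log (1 + Y * u) := calc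
    Y = Y / y * y := by field_simp
    _ ≤ Y / y * log (1 + y * u) := by gcongr
    _ ≤ log (1 + Y / y * (y * u)) :=
      Real.mul_log_one_add_le_log_one_add_mul (by nlinarith) (by positivity)
        ((div_le_one hy₀).mpr hlt.le)
    _ = log (1 + Y * u) := by field_simp
  have hlog_le : log (1 + u) ≤ u := by
    linarith [Real.log_le_sub_one_of_pos (by linarith : 0 < 1 + u)]
  -- `1 + Y * u ≤ 1 + 3 u² < (1 + u) ^ 3 = exp Y`
  have hlt_Y : log (1 + Y * u) < Y := by
    have hY_log : Y = log ((1 + u) ^ 3) := by rw [Real.log_pow]; push_cast; ring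
    rw [hY_log]
    refine Real.log_lt_log (by nlinarith) ?_
    nlinarith [mul_pos (mul_pos hu hu) hu]
  linarith

theorem card_le_of_pow_mul_one_add_pow_le {m d : ℕ} (hd : 0 < d) {lam a c : ℝ} (hlam : 0 < lam)
    (ha : 0 < a) (hc : 0 < c) (h : lam ^ d * (1 + a) ^ m ≤ ((d * lam + m * c) / d) ^ d) :
    (m : ℝ) ≤ 3 * d / Real.log (1 + a) * Real.log (1 + c / (lam * Real.log (1 + a))) := by
  set α := Real.log (1 + a)
  have hα : 0 < α := Real.log_pos (by linarith)
  have hd' : (0 : ℝ) < d := by exact_mod_cast hd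
  have hpow : (1 + a) ^ m ≤ (1 + m * c / (d * lam)) ^ d := by
    rw [show (d * lam + m * c) / d = lam * (1 + m * c / (d * lam)) by field_simp, mul_pow] at h
    exact le_of_mul_le_mul_left h (by positivity)
  have hlog : m * α ≤ d * Real.log (1 + m * c / (d * lam)) := by
    simpa [Real.log_pow] using Real.log_le_log (by positivity) hpow
  have := Real.le_three_mul_log_of_le_log_one_add_mul (y := m * α / d) (u := c / (lam * α))
    (by positivity) (by positivity) (by
      rw [show m * α / d * (c / (lam * α)) = m * c / (d * lam) by field_simp, div_le_iff₀ hd']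
      linarith)
  rw [div_le_iff₀ hd'] at this
  rw [div_mul_eq_mul_div, le_div_iff₀ hα]
  linarith

namespace Matrix

variable {n : Type*} [Fintype n]

theorem posSemidef_sum_vecMulVec_self_s1 {ι : Type*} (s : Finset ι) (x : ι → n → ℝ) :
    (∑ i ∈ s, vecMulVec (x i) (x i)).PosSemidef :=
  posSemidef_sum s fun i _ => by simpa using posSemidef_vecMulVec_self_star (x i)

variable [DecidableEq n]

theorem PosSemidef.det_le_trace_div_card_pow_s1 {A : Matrix n n ℝ} (hA : A.PosSemidef) :
    A.det ≤ (A.trace / Fintype.card n) ^ Fintype.card n := by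
  rw [hA.isHermitian.det_eq_prod_eigenvalues, hA.isHermitian.trace_eq_sum_eigenvalues]
  simpa using prod_le_sum_div_card_pow univ fun i _ => hA.eigenvalues_nonneg i

theorem det_add_vecMulVec_s1 {R : Type*} [CommRing R] {A : Matrix n n R} (hA : IsUnit A.det)
    (u v : n → R) : (A + vecMulVec u v).det = A.det * (1 + v ⬝ᵥ (A⁻¹ *ᵥ u)) := by
  rw [vecMulVec_eq Unit, det_add_replicateCol_mul_replicateRow hA, Matrix.mul_assoc,
    ← replicateCol_mulVec]
  simp [replicateRow_mul_replicateCol_apply]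

theorem PosDef.dotProduct_inv_mulVec_antitone {A B : Matrix n n ℝ} (hA : A.PosDef)
    (hAB : A ≤ B) (x : n → ℝ) : x ⬝ᵥ (B⁻¹ *ᵥ x) ≤ x ⬝ᵥ (A⁻¹ *ᵥ x) := by
  have hBA : (B - A).PosSemidef := le_iff.mp hAB
  have hB : B.PosDef := by simpa using hA.add_posSemidef hBA
  set y := B⁻¹ *ᵥ x
  set z := A⁻¹ *ᵥ x
  have hBy : B *ᵥ y = x := by simp [y, mulVec_mulVec, mul_nonsing_inv B hB.det_pos.ne'.isUnit]
  have hAz : A *ᵥ z = x := by simp [z, mulVec_mulVec, mul_nonsing_inv A hA.det_pos.ne'.isUnit]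
  have hzAy : z ⬝ᵥ (A *ᵥ y) = x ⬝ᵥ y := by
    rw [dotProduct_mulVec, ← mulVec_transpose, (isHermitian_iff_isSymm.mp hA.isHermitian).eq, hAz]
  have hyAy : y ⬝ᵥ (A *ᵥ y) ≤ x ⬝ᵥ y := by
    have := hBA.dotProduct_mulVec_nonneg y
    rw [star_trivial, sub_mulVec, dotProduct_sub, hBy, dotProduct_comm] at this
    linarith
  have hyz := hA.posSemidef.dotProduct_mulVec_nonneg (y - z)
  rw [star_trivial, mulVec_sub, dotProduct_sub, sub_dotProduct, sub_dotProduct, hzAy, hAz,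
    dotProduct_comm y x, dotProduct_comm z x] at hyz
  linarith

end Matrix

section RegularizedGram

variable {n : Type*} [DecidableEq n] {lam : ℝ} {x : ℕ → n → ℝ}

def regularizedGram (lam : ℝ) (x : ℕ → n → ℝ) (s : Finset ℕ) : Matrix n n ℝ :=
  lam • 1 + ∑ i ∈ s, vecMulVec (x i) (x i)

theorem regularizedGram_insert {a : ℕ} {s : Finset ℕ} (ha : a ∉ s) :
    regularizedGram lam x (insert a s) = regularizedGram lam x s + vecMulVec (x a) (x a) := by
  rw [regularizedGram, regularizedGram, sum_insert ha]
  abel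

variable [Fintype n]

theorem regularizedGram_posDef (hlam : 0 < lam) (s : Finset ℕ) :
    (regularizedGram lam x s).PosDef :=
  (PosDef.one.smul hlam).add_posSemidef (posSemidef_sum_vecMulVec_self_s1 s x)

theorem regularizedGram_posSemidef (hlam : 0 ≤ lam) (s : Finset ℕ) :
    (regularizedGram lam x s).PosSemidef :=
  (PosSemidef.one.smul hlam).add (posSemidef_sum_vecMulVec_self_s1 s x)

theorem regularizedGram_mono {s t : Finset ℕ} (hst : s ⊆ t) :
    regularizedGram lam x s ≤ regularizedGram lam x t := by
  rw [le_iff, regularizedGram, regularizedGram, ← sum_sdiff hst, add_sub_add_left_eq_sub,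
    add_sub_cancel_right]
  exact posSemidef_sum_vecMulVec_self_s1 _ x

theorem pow_mul_one_add_pow_card_le_det_regularizedGram (hlam : 0 < lam) {r : ℝ} (hr : 0 ≤ r)
    {s : Finset ℕ} (hs : ∀ t ∈ s, r ≤ x t ⬝ᵥ ((regularizedGram lam x (range t))⁻¹ *ᵥ x t)) :
    lam ^ Fintype.card n * (1 + r) ^ #s ≤ (regularizedGram lam x s).det := by
  induction s using Finset.induction_on_max with
  | empty => simp [regularizedGram]
  | insert a s ha ih =>
    have has : a ∉ s := fun h => lt_irrefl a (ha a h)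
    have hG := regularizedGram_posDef (x := x) hlam s
    have hr_le : r ≤ x a ⬝ᵥ ((regularizedGram lam x s)⁻¹ *ᵥ x a) :=
      (hs a (mem_insert_self a s)).trans <| hG.dotProduct_inv_mulVec_antitone
        (regularizedGram_mono fun b hb => mem_range.mpr (ha b hb)) _
    rw [regularizedGram_insert has, det_add_vecMulVec_s1 hG.det_pos.ne'.isUnit,
      card_insert_of_notMem has, pow_succ, ← mul_assoc]
    exact mul_le_mul (ih fun t ht => hs t (mem_insert_of_mem ht)) (by linarith) (by linarith)
      hG.det_pos.le

theorem det_regularizedGram_le (hlam : 0 ≤ lam) {c : ℝ} {s : Finset ℕ}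
    (hs : ∀ t ∈ s, x t ⬝ᵥ x t ≤ c) :
    (regularizedGram lam x s).det ≤
      ((Fintype.card n * lam + #s * c) / Fintype.card n) ^ Fintype.card n := by
  have hG := regularizedGram_posSemidef (x := x) hlam s
  refine hG.det_le_trace_div_card_pow_s1.trans ?_
  have htrace : (regularizedGram lam x s).trace ≤ Fintype.card n * lam + #s * c := by
    simp only [regularizedGram, trace_add, trace_smul, trace_one, trace_sum, trace_vecMulVec]
    have := sum_le_card_nsmul s _ c hs
    simp only [smul_eq_mul, nsmul_eq_mul] at this ⊢
    linarith
  gcongr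
  exact div_nonneg hG.trace_nonneg (Nat.cast_nonneg _)

end RegularizedGram

theorem card_large_norm_rounds_bound_general (d T : ℕ) (hd : 1 ≤ d)
    (lam L ρ : ℝ) (hlam : 0 < lam) (hL : 0 < L) (hρ : 0 < ρ)
    (x : ℕ → Fin d → ℝ) (hx : ∀ t < T, enorm2 (x t) ≤ L)
    (V : ℕ → Matrix (Fin d) (Fin d) ℝ)
    (hV : ∀ t, V t = lam • (1 : Matrix (Fin d) (Fin d) ℝ) +
      ∑ i ∈ Finset.range t, vecMulVec (x i) (x i)) :
    ((((Finset.range T).filter (fun t => ρ ≤ wnorm (V t)⁻¹ (x t))).card : ℝ)) ≤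
      3 * (d : ℝ) / Real.log (1 + ρ ^ 2) *
        Real.log (1 + L ^ 2 / (lam * Real.log (1 + ρ ^ 2))) := by
  set S := (Finset.range T).filter (fun t => ρ ≤ wnorm (V t)⁻¹ (x t))
  have hlarge : ∀ t ∈ S, ρ ^ 2 ≤ x t ⬝ᵥ ((regularizedGram lam x (range t))⁻¹ *ᵥ x t) := by
    intro t ht
    have := (mem_filter.mp ht).2
    rwa [wnorm, hV, Real.le_sqrt' hρ] at this
  have hbounded : ∀ t ∈ S, x t ⬝ᵥ x t ≤ L ^ 2 := by
    intro t ht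
    have := hx t (mem_range.mp (mem_filter.mp ht).1)
    rw [enorm2, Real.sqrt_le_left hL.le] at this
    simpa [dotProduct, sq] using this
  have hdet := (pow_mul_one_add_pow_card_le_det_regularizedGram hlam (sq_nonneg ρ) hlarge).trans
    (det_regularizedGram_le hlam.le hbounded)
  rw [Fintype.card_fin] at hdet
  exact card_le_of_pow_mul_one_add_pow_le hd hlam (by positivity) (by positivity) hdet

theorem card_large_norm_rounds_bound (d T : ℕ) (hd : 1 ≤ d) (hT : 1 ≤ T)
    (lam L ρ : ℝ) (hlam : 0 < lam) (hL : 0 < L) (hρ : 0 < ρ)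
    (x : ℕ → Fin d → ℝ) (hx : ∀ t < T, enorm2 (x t) ≤ L)
    (V : ℕ → Matrix (Fin d) (Fin d) ℝ)
    (hV : ∀ t, V t = lam • (1 : Matrix (Fin d) (Fin d) ℝ) +
      ∑ i ∈ Finset.range t, vecMulVec (x i) (x i)) :
    ((((Finset.range T).filter (fun t => ρ ≤ wnorm (V t)⁻¹ (x t))).card : ℝ)) ≤
      3 * (d : ℝ) / Real.log (1 + ρ ^ 2) *
        Real.log (1 + L ^ 2 / (lam * Real.log (1 + ρ ^ 2))) :=
  card_large_norm_rounds_bound_general d T hd lam L ρ hlam hL hρ x hx V hV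
end

section
/- For all real numbers a > 0, b > 0 and c ≥ 0, if c ≤ a · log(1 + b·c), then c ≤ 3a · log(1 + a·b). -/
theorem log_self_bound (a b c : ℝ) (ha : 0 < a) (hb : 0 < b) (hc : 0 ≤ c)
    (h : c ≤ a * Real.log (1 + b * c)) :
    c ≤ 3 * a * Real.log (1 + a * b) := by
  rcases hc.eq_or_lt with rfl | hc'
  · have hlog : (0:ℝ) ≤ Real.log (1 + a * b) :=
      Real.log_nonneg (by nlinarith)
    nlinarith
  · -- c > 0
    have h1 : Real.log (1 + b * c) ≤ b * c := by
      have := Real.log_le_sub_one_of_pos (x := 1 + b * c) (by positivity)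
      linarith
    have hab1 : 1 ≤ a * b := by
      nlinarith [mul_le_mul_of_nonneg_left h1 ha.le]
    have hpos1 : (0:ℝ) < 1 + a * b := by nlinarith
    have hpos2 : (0:ℝ) < 1 + c / a := by positivity
    have hL2 : Real.log 2 ≤ Real.log (1 + a * b) :=
      Real.log_le_log (by norm_num) (by linarith)
    have key1 : Real.log (1 + b * c) ≤ Real.log (1 + a * b) + Real.log (1 + c / a) := by
      have hle : 1 + b * c ≤ (1 + a * b) * (1 + c / a) := by
        have heq : (1 + a * b) * (1 + c / a) = 1 + a * b + c / a + b * c := by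
          field_simp; ring
        have : (0:ℝ) ≤ c / a := div_nonneg hc ha.le
        nlinarith
      calc Real.log (1 + b * c) ≤ Real.log ((1 + a * b) * (1 + c / a)) :=
            Real.log_le_log (by positivity) hle
        _ = Real.log (1 + a * b) + Real.log (1 + c / a) :=
            Real.log_mul (ne_of_gt hpos1) (ne_of_gt hpos2)
    have key2 : Real.log (1 + c / a) ≤ Real.log 3 + (c / a - 2) / 3 := by
      have h2 := Real.log_le_sub_one_of_pos (x := (1 + c / a) / 3) (by positivity)
      have heq : Real.log ((1 + c / a) / 3) = Real.log (1 + c / a) - Real.log 3 :=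
        Real.log_div (ne_of_gt hpos2) (by norm_num)
      rw [heq] at h2
      linarith
    have key3 : Real.log 3 - 2 / 3 ≤ Real.log 2 := by
      have h3 := Real.log_le_sub_one_of_pos (x := (3:ℝ)/2) (by norm_num)
      have heq : Real.log ((3:ℝ)/2) = Real.log 3 - Real.log 2 :=
        Real.log_div (by norm_num) (by norm_num)
      rw [heq] at h3
      linarith
    have hca : a * (c / a) = c := by field_simp
    nlinarith [mul_le_mul_of_nonneg_left key1 ha.le,
      mul_le_mul_of_nonneg_left key2 ha.le,
      mul_le_mul_of_nonneg_left hL2 ha.le,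
      mul_le_mul_of_nonneg_left key3 ha.le]
end
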